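/- arXiv:1804.06187 — 2 statements merged into one kernel-verified Lean document; each statement's English description precedes it below -/
import Mathlib

section
/- If P(H) > 0, P(K) > 0, P(A∩H) > 0, and A|H logically implies B|K in the sense of Goodman–Nguyen (A|H ⊑ B|K), then the iterated conditional satisfies ⟦(B|K)|(A|H)⟧(ω) = 1 for every ω ∈ Ω; in particular its prevision μ equals 1. -/
/-!
On `H ∪ K`, Goodman–Nguyen implication gives `⟦A|H⟧ ≤ ⟦B|K⟧`: off `H` the value `P(A|H) ≤ 1`
is compared with `⟦B|K⟧ = 1`, since `K ∖ H ⊆ B`. So the conjunction is `⟦A|H⟧` on `H ∪ K`,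
its prevision is `z = P(A|H)`, and `μ = 1`. The iterated conditional is then
`⟦A|H⟧ + (1 - ⟦A|H⟧)` on `H ∪ K` and `z + (1 - P(A|H))` off it.
-/

open MeasureTheory Set
open scoped Classical

noncomputable section

variable {Ω : Type*} [MeasurableSpace Ω]

/-- Indicator (with values in `ℝ`) of a set. -/
def ind (A : Set Ω) : Ω → ℝ := A.indicator 1

/-- Conditional probability `P(A|H) = P(A ∩ H)/P(H)`. -/
def condProb (P : Measure Ω) (A H : Set Ω) : ℝ :=
  (P (A ∩ H)).toReal / (P H).toReal

/-- The (indicator of the) conditional event `A|H`,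
`⟦A|H⟧ = 1_{A∩H} + P(A|H)·1_{Hᶜ}`. -/
def condEvent (P : Measure Ω) (A H : Set Ω) : Ω → ℝ :=
  fun ω => ind (A ∩ H) ω + condProb P A H * ind Hᶜ ω

/-- The prevision `z` of the conjunction `(A|H) ∧ (B|K)`:
`z = E[min(⟦A|H⟧, ⟦B|K⟧)·1_{H∪K}]/P(H∪K)`. -/
def conjPrev (P : Measure Ω) (A H B K : Set Ω) : ℝ :=
  (∫ ω, min (condEvent P A H ω) (condEvent P B K ω) * ind (H ∪ K) ω ∂P) /
    (P (H ∪ K)).toReal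

/-- The conjunction `⟦(A|H) ∧ (B|K)⟧ = min(⟦A|H⟧, ⟦B|K⟧)·1_{H∪K} + z·1_{(H∪K)ᶜ}`. -/
def conjCE (P : Measure Ω) (A H B K : Set Ω) : Ω → ℝ :=
  fun ω => min (condEvent P A H ω) (condEvent P B K ω) * ind (H ∪ K) ω
    + conjPrev P A H B K * ind (H ∪ K)ᶜ ω

/-- The iterated conditional `⟦(B|K)|(A|H)⟧ = ⟦(A|H)∧(B|K)⟧ + μ·(1 − ⟦A|H⟧)`,
with `μ = z / P(A|H)`. -/
def iterCond (P : Measure Ω) (A H B K : Set Ω) : Ω → ℝ :=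
  fun ω => conjCE P A H B K ω +
    (conjPrev P A H B K / condProb P A H) * (1 - condEvent P A H ω)

/-- Goodman–Nguyen logical implication between conditional events:
`A|H ⊑ B|K` iff `A∩H ⊆ B∩K` and `Bᶜ∩K ⊆ Aᶜ∩H`. -/
def GNle (A H B K : Set Ω) : Prop := A ∩ H ⊆ B ∩ K ∧ Bᶜ ∩ K ⊆ Aᶜ ∩ H

section Indicator

variable {S : Set Ω} {ω : Ω}

omit [MeasurableSpace Ω] in
@[simp] lemma ind_of_mem (h : ω ∈ S) : ind S ω = 1 := by simp [ind, h]

omit [MeasurableSpace Ω] in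
@[simp] lemma ind_of_notMem (h : ω ∉ S) : ind S ω = 0 := by simp [ind, h]

omit [MeasurableSpace Ω] in
lemma ind_nonneg (S : Set Ω) (ω : Ω) : 0 ≤ ind S ω :=
  Set.indicator_nonneg (fun _ _ => zero_le_one) ω

lemma integrable_ind (P : Measure Ω) [IsFiniteMeasure P] (hS : MeasurableSet S) :
    Integrable (ind S) P :=
  (integrable_const (1 : ℝ)).indicator hS

lemma integral_ind (P : Measure Ω) (hS : MeasurableSet S) : ∫ ω, ind S ω ∂P = P.real S :=
  integral_indicator_one hS

end Indicator

section CondEvent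

variable (P : Measure Ω) {A H B K : Set Ω} {ω : Ω}

lemma condProb_eq_measureReal_div (A H : Set Ω) :
    condProb P A H = P.real (A ∩ H) / P.real H := rfl

lemma condProb_nonneg (A H : Set Ω) : 0 ≤ condProb P A H :=
  div_nonneg measureReal_nonneg measureReal_nonneg

lemma condProb_le_one [IsFiniteMeasure P] (A H : Set Ω) : condProb P A H ≤ 1 :=
  div_le_one_of_le₀ (measureReal_mono inter_subset_right) measureReal_nonneg

lemma condProb_pos [IsFiniteMeasure P] (hAH : 0 < P (A ∩ H)) : 0 < condProb P A H := by
  have hAH' : 0 < P.real (A ∩ H) := ENNReal.toReal_pos hAH.ne' (measure_ne_top P _)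
  rw [condProb_eq_measureReal_div]
  exact div_pos hAH' (hAH'.trans_le (measureReal_mono inter_subset_right))

lemma condProb_mul_measureReal [IsFiniteMeasure P] (A H : Set Ω) :
    condProb P A H * P.real H = P.real (A ∩ H) := by
  rw [condProb_eq_measureReal_div]
  rcases eq_or_ne (P.real H) 0 with hH | hH
  · have : P.real (A ∩ H) ≤ 0 := hH ▸ measureReal_mono inter_subset_right
    rw [hH, mul_zero]
    exact (this.antisymm measureReal_nonneg).symm
  · exact div_mul_cancel₀ _ hH

lemma condEvent_of_mem_inter (h : ω ∈ A ∩ H) : condEvent P A H ω = 1 := by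
  simp [condEvent, h, h.2]

lemma condEvent_of_mem_of_notMem (hH : ω ∈ H) (hA : ω ∉ A) : condEvent P A H ω = 0 := by
  simp [condEvent, hH, hA]

lemma condEvent_of_notMem (hH : ω ∉ H) : condEvent P A H ω = condProb P A H := by
  simp [condEvent, hH]

lemma condEvent_nonneg (A H : Set Ω) (ω : Ω) : 0 ≤ condEvent P A H ω :=
  add_nonneg (ind_nonneg _ ω) (mul_nonneg (condProb_nonneg P A H) (ind_nonneg _ ω))

lemma condEvent_mul_ind_union (A H K : Set Ω) (ω : Ω) :
    condEvent P A H ω * ind (H ∪ K) ω = ind (A ∩ H) ω + condProb P A H * ind (K \ H) ω := by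
  by_cases hH : ω ∈ H <;> by_cases hK : ω ∈ K <;> simp [condEvent, hH, hK]

lemma condEvent_le_of_GNle [IsFiniteMeasure P] (hGN : GNle A H B K) (hω : ω ∈ H ∪ K) :
    condEvent P A H ω ≤ condEvent P B K ω := by
  obtain ⟨hAB, hBA⟩ := hGN
  by_cases hωH : ω ∈ H
  · by_cases hωA : ω ∈ A
    · rw [condEvent_of_mem_inter P ⟨hωA, hωH⟩, condEvent_of_mem_inter P (hAB ⟨hωA, hωH⟩)]
    · rw [condEvent_of_mem_of_notMem P hωH hωA]
      exact condEvent_nonneg P B K ω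
  · have hωK : ω ∈ K := hω.resolve_left hωH
    have hωB : ω ∈ B := by_contra fun hωB => hωH (hBA ⟨hωB, hωK⟩).2
    rw [condEvent_of_notMem P hωH, condEvent_of_mem_inter P ⟨hωB, hωK⟩]
    exact condProb_le_one P A H

lemma min_condEvent_mul_ind_union_of_GNle [IsFiniteMeasure P] (hGN : GNle A H B K) (ω : Ω) :
    min (condEvent P A H ω) (condEvent P B K ω) * ind (H ∪ K) ω
      = condEvent P A H ω * ind (H ∪ K) ω := by
  by_cases hω : ω ∈ H ∪ K
  · rw [min_eq_left (condEvent_le_of_GNle P hGN hω)]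
  · simp [hω]

/-- The conjunction's integrand is `1_{A∩H} + P(A|H)·1_{K∖H}`, whose mean is `P(A|H)·P(H ∪ K)`. -/
lemma conjPrev_eq_condProb_of_GNle [IsFiniteMeasure P] (hAm : MeasurableSet A)
    (hHm : MeasurableSet H) (hKm : MeasurableSet K) (hGN : GNle A H B K) :
    conjPrev P A H B K = condProb P A H := by
  have hint : ∫ ω, min (condEvent P A H ω) (condEvent P B K ω) * ind (H ∪ K) ω ∂P
      = condProb P A H * P.real (H ∪ K) := by
    simp_rw [min_condEvent_mul_ind_union_of_GNle P hGN, condEvent_mul_ind_union]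
    rw [integral_add (integrable_ind P (hAm.inter hHm))
        ((integrable_ind P (hKm.diff hHm)).const_mul _), integral_const_mul,
      integral_ind P (hAm.inter hHm), integral_ind P (hKm.diff hHm),
      ← condProb_mul_measureReal, ← mul_add, ← measureReal_union disjoint_sdiff_right
        (hKm.diff hHm), union_sdiff_self]
  rw [conjPrev, ← measureReal_def, hint]
  rcases eq_or_ne (P.real (H ∪ K)) 0 with hHK | hHK
  · have hH : P.real H = 0 :=
      ((measureReal_mono subset_union_left).trans_eq hHK).antisymm measureReal_nonneg
    simp [condProb_eq_measureReal_div, hH]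
  · exact mul_div_cancel_right₀ _ hHK

lemma iterCond_of_mem_union (hω : ω ∈ H ∪ K) :
    iterCond P A H B K ω = min (condEvent P A H ω) (condEvent P B K ω)
      + conjPrev P A H B K / condProb P A H * (1 - condEvent P A H ω) := by
  simp only [iterCond, conjCE, ind_of_mem hω, ind_of_notMem (notMem_compl_iff.mpr hω), mul_one,
    mul_zero, add_zero]

lemma iterCond_of_notMem_union (hω : ω ∉ H ∪ K) :
    iterCond P A H B K ω = conjPrev P A H B K
      + conjPrev P A H B K / condProb P A H * (1 - condProb P A H) := by
  simp only [iterCond, conjCE, ind_of_notMem hω, ind_of_mem (show ω ∈ (H ∪ K)ᶜ from hω),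
    condEvent_of_notMem P (fun hH => hω (Or.inl hH)), mul_zero, mul_one, zero_add]

end CondEvent

theorem iterCond_eq_one_of_GNle_general (P : Measure Ω) [IsProbabilityMeasure P]
    (A H B K : Set Ω)
    (hAm : MeasurableSet A) (hHm : MeasurableSet H)
    (hKm : MeasurableSet K)
    (hAH : 0 < P (A ∩ H))
    (hGN : GNle A H B K) :
    (∀ ω, iterCond P A H B K ω = 1) ∧
      conjPrev P A H B K / condProb P A H = 1 := by
  have hz := conjPrev_eq_condProb_of_GNle P hAm hHm hKm hGN
  have hμ : conjPrev P A H B K / condProb P A H = 1 := by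
    rw [hz, div_self (condProb_pos P hAH).ne']
  refine ⟨fun ω => ?_, hμ⟩
  by_cases hω : ω ∈ H ∪ K
  · rw [iterCond_of_mem_union P hω, min_eq_left (condEvent_le_of_GNle P hGN hω), hμ]
    ring
  · rw [iterCond_of_notMem_union P hω, hμ, hz]
    ring

/-- If `P(A∩H) > 0` and `A|H ⊑ B|K` (Goodman–Nguyen), then the iterated
conditional `⟦(B|K)|(A|H)⟧` is constantly `1`; in particular its prevision
`μ = z/P(A|H)` equals `1`. -/
theorem iterCond_eq_one_of_GNle (P : Measure Ω) [IsProbabilityMeasure P]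
    (A H B K : Set Ω)
    (hAm : MeasurableSet A) (hHm : MeasurableSet H)
    (hBm : MeasurableSet B) (hKm : MeasurableSet K)
    (hH : 0 < P H) (hK : 0 < P K) (hAH : 0 < P (A ∩ H))
    (hGN : GNle A H B K) :
    (∀ ω, iterCond P A H B K ω = 1) ∧
      conjPrev P A H B K / condProb P A H = 1 :=
  iterCond_eq_one_of_GNle_general P A H B K hAm hHm hKm hAH hGN

end
end

section
/- Or rule: for events A, B, C with P(A) > 0 and P(B) > 0, if the prevision z of C2 := ⟦(C|A)∧(C|B)⟧ is strictly positive, then the iterated conditional satisfies ⟦(C|(A∪B))|((C|A)∧(C|B))⟧(ω) = 1 for every ω ∈ Ω. -/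
/-! On `A` both `⟦C|(A∪B)⟧` and `⟦C|A⟧` equal `1_C`, and on `B` both `⟦C|(A∪B)⟧` and `⟦C|B⟧` do,
so on `A ∪ B` adding `⟦C|(A∪B)⟧` to the minimum `min(⟦C|A⟧, ⟦C|B⟧)` changes nothing. Hence the
triple conjunction is the double one, `t = z`, and the iterated conditional is
`C2 + (z/z)(1 - C2) = 1`. -/

open MeasureTheory Set
open scoped Classical

noncomputable section

variable {Ω : Type*} [MeasurableSpace Ω]

/-- Or rule: `min(⟦C|(A∪B)⟧, ⟦C|A⟧, ⟦C|B⟧)`. -/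
def orMin (P : Measure Ω) (A B C : Set Ω) : Ω → ℝ :=
  fun ω => min (condEvent P C (A ∪ B) ω) (min (condEvent P C A ω) (condEvent P C B ω))

/-- Or rule: the prevision `t = E[min(⟦C|(A∪B)⟧, ⟦C|A⟧, ⟦C|B⟧)·1_{A∪B}]/P(A∪B)`
of the triple conjunction. -/
def orPrev (P : Measure Ω) (A B C : Set Ω) : ℝ :=
  (∫ ω, orMin P A B C ω * ind (A ∪ B) ω ∂P) / (P (A ∪ B)).toReal

/-- Or rule: the triple conjunction
`T3 = ⟦(C|(A∪B))∧(C|A)∧(C|B)⟧ = min(⟦C|(A∪B)⟧, ⟦C|A⟧, ⟦C|B⟧)·1_{A∪B} + t·1_{(A∪B)ᶜ}`. -/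
def orT3 (P : Measure Ω) (A B C : Set Ω) : Ω → ℝ :=
  fun ω => orMin P A B C ω * ind (A ∪ B) ω + orPrev P A B C * ind (A ∪ B)ᶜ ω

/-- Or rule: the iterated conditional
`⟦(C|(A∪B))|((C|A)∧(C|B))⟧ = T3 + (t/z)·(1 − C2)` where `C2 = ⟦(C|A)∧(C|B)⟧`. -/
def orIter (P : Measure Ω) (A B C : Set Ω) : Ω → ℝ :=
  fun ω => orT3 P A B C ω +
    (orPrev P A B C / conjPrev P C A C B) * (1 - conjCE P C A C B ω)

lemma condEvent_of_mem (P : Measure Ω) (A : Set Ω) {H : Set Ω} {ω : Ω} (h : ω ∈ H) :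
    condEvent P A H ω = ind A ω := by
  simp [condEvent, ind, Set.indicator, h]

lemma orMin_of_mem_union (P : Measure Ω) {A B : Set Ω} (C : Set Ω) {ω : Ω} (h : ω ∈ A ∪ B) :
    orMin P A B C ω = min (condEvent P C A ω) (condEvent P C B ω) := by
  rcases h with hA | hB
  · rw [orMin, condEvent_of_mem P C (mem_union_left B hA), ← condEvent_of_mem P C hA,
      ← min_assoc, min_self]
  · rw [orMin, condEvent_of_mem P C (mem_union_right A hB), ← condEvent_of_mem P C hB,
      min_comm (condEvent P C A ω), ← min_assoc, min_self]

lemma orMin_mul_ind (P : Measure Ω) (A B C : Set Ω) (ω : Ω) :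
    orMin P A B C ω * ind (A ∪ B) ω =
      min (condEvent P C A ω) (condEvent P C B ω) * ind (A ∪ B) ω := by
  by_cases h : ω ∈ A ∪ B
  · rw [orMin_of_mem_union P C h]
  · simp [ind, h]

lemma orPrev_eq_conjPrev (P : Measure Ω) (A B C : Set Ω) :
    orPrev P A B C = conjPrev P C A C B := by
  simp only [orPrev, conjPrev, orMin_mul_ind]

lemma orT3_eq_conjCE (P : Measure Ω) (A B C : Set Ω) (ω : Ω) :
    orT3 P A B C ω = conjCE P C A C B ω := by
  rw [orT3, conjCE, orMin_mul_ind, orPrev_eq_conjPrev]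

theorem or_rule_general (P : Measure Ω)
    (A B C : Set Ω)
    (hz : 0 < conjPrev P C A C B) :
    ∀ ω, orIter P A B C ω = 1 := by
  intro ω
  rw [orIter, orT3_eq_conjCE, orPrev_eq_conjPrev, div_self hz.ne']
  ring

/-- Or rule: if the prevision `z` of `C2 = ⟦(C|A)∧(C|B)⟧` is strictly positive,
then the iterated conditional `⟦(C|(A∪B))|((C|A)∧(C|B))⟧` is constantly `1`. -/
theorem or_rule (P : Measure Ω) [IsProbabilityMeasure P]
    (A B C : Set Ω)
    (hAm : MeasurableSet A) (hBm : MeasurableSet B) (hCm : MeasurableSet C)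
    (hA : 0 < P A) (hB : 0 < P B)
    (hz : 0 < conjPrev P C A C B) :
    ∀ ω, orIter P A B C ω = 1 :=
  or_rule_general P A B C hz

end
end
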